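/- arXiv:0910.3024 — 2 statements merged into one kernel-verified Lean document; each statement's English description precedes it below -/
import Mathlib

section
/- Let K = ℚ, let A be a set partition of Fin d with at most n blocks, and for each i ≥ 1 let a_i be the number of blocks of A of cardinality i. Let m_A := Σ_{z : Fin d → Fin n, τ(z) = A} ι(z 0)·ι(z 1)⋯ι(z (d−1)) ∈ FreeAlgebra K (Fin n), and let ab : FreeAlgebra K (Fin n) → MvPolynomial (Fin n) K be the algebra homomorphism with ab(ι(i)) = X_i. Then ab(m_A) = (∏_{i ≥ 1} a_i!) · m_μ, where μ = λ(A) and m_μ := Σ_{α : Fin n → ℕ with multiset of nonzero values equal to μ} ∏_i X_i^{α(i)} is the monomial symmetric polynomial indexed by μ. -/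
/-- A set partition of `Fin d`. -/
def IsSetPartition {d : ℕ} (P : Finset (Finset (Fin d))) : Prop :=
  ∅ ∉ P ∧ ∀ i : Fin d, ∃! B, B ∈ P ∧ i ∈ B

/-- The type `τ(z)` of `z : Fin d → Fin n`: the set partition of `Fin d` whose blocks
are the nonempty fibers of `z`. -/
def fiberPartition {n d : ℕ} (z : Fin d → Fin n) : Finset (Finset (Fin d)) :=
  (Finset.univ.image fun x => Finset.univ.filter fun i => z i = x).erase ∅

section Count
variable {β γ : Type*} [Fintype β] [Fintype γ] [DecidableEq β] [DecidableEq γ]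
  (f : β → ℕ) (g : γ → ℕ)

/-- restriction of a fiber-respecting equiv to a fiber -/
def fwdPi (e : {e : β ≃ γ // ∀ b, g (e b) = f b}) (i : ℕ) :
    {b // f b = i} ≃ {c // g c = i} where
  toFun b := ⟨e.1 b.1, by rw [e.2]; exact b.2⟩
  invFun c := ⟨e.1.symm c.1, by
    have h2 := e.2 (e.1.symm c.1); rw [Equiv.apply_symm_apply] at h2; rw [← h2]; exact c.2⟩
  left_inv b := by simp
  right_inv c := by simp

noncomputable def extendFam (himg : Finset.univ.image f = Finset.univ.image g)
    (h : ∀ i : ↑(Finset.univ.image f), ({b // f b = i.1} ≃ {c // g c = i.1})) (i : ℕ) :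
    {b // f b = i} ≃ {c // g c = i} :=
  if hi : i ∈ Finset.univ.image f then h ⟨i, hi⟩ else
    @Equiv.equivOfIsEmpty _ _
      ⟨fun b => hi (by rw [← b.2]; exact Finset.mem_image_of_mem f (Finset.mem_univ b.1))⟩
      ⟨fun c => hi (by rw [himg, ← c.2]; exact Finset.mem_image_of_mem g (Finset.mem_univ c.1))⟩

noncomputable def bigInv (himg : Finset.univ.image f = Finset.univ.image g)
    (h : ∀ i : ↑(Finset.univ.image f), ({b // f b = i.1} ≃ {c // g c = i.1})) :
    {e : β ≃ γ // ∀ b, g (e b) = f b} :=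
  ⟨(Equiv.sigmaFiberEquiv f).symm.trans ((Equiv.sigmaCongrRight (extendFam f g himg h)).trans
      (Equiv.sigmaFiberEquiv g)),
    fun b => (extendFam f g himg h (f b) ⟨b, rfl⟩).2⟩

lemma bigInv_apply (himg) (h) (b : β) :
    (bigInv f g himg h).1 b = (extendFam f g himg h (f b) ⟨b, rfl⟩).1 := rfl

lemma fwdPi_bigInv (himg) (h) (i : ℕ) :
    fwdPi f g (bigInv f g himg h) i = extendFam f g himg h i := by
  apply Equiv.ext; rintro ⟨b, hb⟩
  apply Subtype.ext
  show (bigInv f g himg h).1 b = _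
  rw [bigInv_apply]
  subst hb
  rfl

noncomputable def bigEquiv (himg : Finset.univ.image f = Finset.univ.image g) :
    {e : β ≃ γ // ∀ b, g (e b) = f b} ≃
      (∀ i : ↑(Finset.univ.image f), ({b // f b = i.1} ≃ {c // g c = i.1})) where
  toFun e i := fwdPi f g e i.1
  invFun h := bigInv f g himg h
  left_inv e := by
    apply Subtype.ext; apply Equiv.ext; intro b
    rw [bigInv_apply]
    have hb : f b ∈ Finset.univ.image f := Finset.mem_image_of_mem f (Finset.mem_univ b)
    simp only [extendFam, dif_pos hb]
    rfl
  right_inv h := by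
    funext i
    show fwdPi f g (bigInv f g himg h) i.1 = h i
    rw [fwdPi_bigInv]
    simp only [extendFam, dif_pos i.2]

lemma count_fiber_equiv (h : Finset.univ.val.map f = Finset.univ.val.map g) :
    Fintype.card {e : β ≃ γ // ∀ b, g (e b) = f b} =
      ∏ i ∈ Finset.univ.image f, (Finset.univ.filter fun b => f b = i).card.factorial := by
  have himg : Finset.univ.image f = Finset.univ.image g := by
    ext i
    simp only [Finset.mem_image]
    constructor
    · rintro ⟨b, -, rfl⟩
      have : f b ∈ Finset.univ.val.map g := by rw [← h]; simp [Multiset.mem_map]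
      obtain ⟨c, -, hc⟩ := Multiset.mem_map.mp this
      exact ⟨c, Finset.mem_univ c, hc⟩
    · rintro ⟨c, -, rfl⟩
      have : g c ∈ Finset.univ.val.map f := by rw [h]; simp [Multiset.mem_map]
      obtain ⟨b, -, hb⟩ := Multiset.mem_map.mp this
      exact ⟨b, Finset.mem_univ b, hb⟩
  have hcard : ∀ i : ℕ, Fintype.card {b // f b = i} = Fintype.card {c // g c = i} := by
    intro i
    rw [Fintype.card_subtype, Fintype.card_subtype]
    have e1 : (Finset.univ.filter fun b => f b = i) = (Finset.univ.filter fun b => i = f b) := by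
      ext; simp [eq_comm]
    have e2 : (Finset.univ.filter fun c => g c = i) = (Finset.univ.filter fun c => i = g c) := by
      ext; simp [eq_comm]
    rw [e1, e2]
    have := congrArg (Multiset.count i) h
    rwa [Multiset.count_map, Multiset.count_map, ← Finset.filter_val, ← Finset.filter_val,
      Finset.card_val, Finset.card_val] at this
  rw [Fintype.card_congr (bigEquiv f g himg), Fintype.card_pi]
  rw [← Finset.prod_coe_sort (Finset.univ.image f)
    (fun i => (Finset.univ.filter fun b => f b = i).card.factorial)]
  congr 1
  funext i
  rw [Fintype.card_equiv (Fintype.equivOfCardEq (hcard i.1)), Fintype.card_subtype]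

end Count

section ZSide
variable {n d : ℕ}

def fib (z : Fin d → Fin n) (x : Fin n) : Finset (Fin d) :=
  Finset.univ.filter fun i => z i = x

lemma mem_fib {z : Fin d → Fin n} {x : Fin n} {i : Fin d} : i ∈ fib z x ↔ z i = x := by
  simp [fib]

noncomputable def wt (z : Fin d → Fin n) : Fin n →₀ ℕ :=
  ∑ i, Finsupp.single (z i) 1

lemma wt_apply (z : Fin d → Fin n) (x : Fin n) : wt z x = (fib z x).card := by
  rw [wt, Finsupp.finset_sum_apply, fib, Finset.card_filter]
  simp [Finsupp.single_apply]

lemma mem_fiberPartition {z : Fin d → Fin n} {B : Finset (Fin d)} :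
    B ∈ fiberPartition z ↔ B ≠ ∅ ∧ ∃ x, fib z x = B := by
  simp [fiberPartition, fib, Finset.mem_erase, eq_comm, and_comm]

lemma mem_support_wt {z : Fin d → Fin n} {x : Fin n} :
    x ∈ (wt z).support ↔ fib z x ≠ ∅ := by
  rw [Finsupp.mem_support_iff, wt_apply, ← Finset.card_eq_zero.ne]

end ZSide

section Psi
variable {n d : ℕ} {P : Finset (Finset (Fin d))} (hP : IsSetPartition P) (α : Fin n →₀ ℕ)

noncomputable def blockOf (i : Fin d) : Finset (Fin d) :=
  Finset.choose (fun B => i ∈ B) P (hP.2 i)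

lemma blockOf_mem (i : Fin d) : blockOf hP i ∈ P := Finset.choose_mem _ _ _

lemma mem_blockOf (i : Fin d) : i ∈ blockOf hP i :=
  Finset.choose_property (fun B => i ∈ B) P (hP.2 i)

lemma blockOf_eq {i : Fin d} {B : Finset (Fin d)} (hB : B ∈ P) (hi : i ∈ B) :
    blockOf hP i = B :=
  (hP.2 i).unique ⟨blockOf_mem hP i, mem_blockOf hP i⟩ ⟨hB, hi⟩

/-- the z built from a fiber-respecting bijection -/
noncomputable def zOf (e : {e : ↥α.support ≃ ↥P // ∀ x, (e x).1.card = α x.1}) :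
    Fin d → Fin n :=
  fun i => (e.1.symm ⟨blockOf hP i, blockOf_mem hP i⟩).1

lemma fib_zOf_mem (e) {x : Fin n} (hx : x ∈ α.support) :
    fib (zOf hP α e) x = (e.1 ⟨x, hx⟩).1 := by
  ext i
  rw [mem_fib, zOf]
  constructor
  · intro h
    have h2 : e.1.symm ⟨blockOf hP i, blockOf_mem hP i⟩ = ⟨x, hx⟩ := Subtype.ext h
    rw [Equiv.symm_apply_eq] at h2
    rw [← h2]
    exact mem_blockOf hP i
  · intro h
    have h2 : blockOf hP i = (e.1 ⟨x, hx⟩).1 := blockOf_eq hP (e.1 ⟨x, hx⟩).2 h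
    have h3 : (⟨blockOf hP i, blockOf_mem hP i⟩ : ↥P) = e.1 ⟨x, hx⟩ := Subtype.ext h2
    rw [h3, Equiv.symm_apply_apply]

lemma fib_zOf_empty (e) {x : Fin n} (hx : x ∉ α.support) :
    fib (zOf hP α e) x = ∅ := by
  ext i
  simp only [Finset.notMem_empty, iff_false, mem_fib, zOf]
  intro h
  exact hx (h ▸ (e.1.symm ⟨blockOf hP i, blockOf_mem hP i⟩).2)

lemma fiberPartition_zOf (e) : fiberPartition (zOf hP α e) = P := by
  ext B
  rw [mem_fiberPartition]
  constructor
  · rintro ⟨hne, x, rfl⟩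
    by_cases hx : x ∈ α.support
    · rw [fib_zOf_mem hP α e hx]; exact (e.1 ⟨x, hx⟩).2
    · exact absurd (fib_zOf_empty hP α e hx) hne
  · intro hB
    refine ⟨fun h => hP.1 (h ▸ hB), (e.1.symm ⟨B, hB⟩).1, ?_⟩
    rw [fib_zOf_mem hP α e (e.1.symm ⟨B, hB⟩).2]
    rw [Subtype.coe_eta, Equiv.apply_symm_apply]

lemma wt_zOf (e) : wt (zOf hP α e) = α := by
  ext x
  rw [wt_apply]
  by_cases hx : x ∈ α.support
  · rw [fib_zOf_mem hP α e hx, e.2 ⟨x, hx⟩]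
  · rw [fib_zOf_empty hP α e hx, Finset.card_empty]
    exact (Finsupp.notMem_support_iff.mp hx).symm

end Psi

section Psi2
variable {n d : ℕ} {P : Finset (Finset (Fin d))} (hP : IsSetPartition P) (α : Fin n →₀ ℕ)

lemma fib_mem_P {z : Fin d → Fin n} (hz : fiberPartition z = P) {x : Fin n}
    (hx : x ∈ (wt z).support) : fib z x ∈ P := by
  rw [← hz, mem_fiberPartition]
  exact ⟨mem_support_wt.mp hx, x, rfl⟩

def Fmap (z : {z : Fin d → Fin n // fiberPartition z = P ∧ wt z = α}) (x : ↥α.support) : ↥P :=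
  ⟨fib z.1 x.1, fib_mem_P z.2.1 (by rw [z.2.2]; exact x.2)⟩

lemma Fmap_bij (z) : Function.Bijective (Fmap (P := P) α z) := by
  constructor
  · rintro ⟨x, hx⟩ ⟨y, hy⟩ hxy
    have h1 : fib z.1 x = fib z.1 y := congrArg Subtype.val hxy
    have h2 : fib z.1 x ≠ ∅ := by
      have hx' : x ∈ (wt z.1).support := by rw [z.2.2]; exact hx
      exact mem_support_wt.mp hx'
    obtain ⟨i, hi⟩ := Finset.nonempty_iff_ne_empty.mpr h2
    have e1 := mem_fib.mp hi
    have e2 := mem_fib.mp (h1 ▸ hi)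
    exact Subtype.ext (e1.symm.trans e2)
  · rintro ⟨B, hB⟩
    rw [← z.2.1, mem_fiberPartition] at hB
    obtain ⟨hne, x, hx⟩ := hB
    have hxs : x ∈ α.support := by
      have : x ∈ (wt z.1).support := by rw [mem_support_wt, hx]; exact hne
      rwa [z.2.2] at this
    exact ⟨⟨x, hxs⟩, Subtype.ext hx⟩

noncomputable def Psi : {z : Fin d → Fin n // fiberPartition z = P ∧ wt z = α} ≃
    {e : ↥α.support ≃ ↥P // ∀ x, (e x).1.card = α x.1} where
  toFun z := ⟨Equiv.ofBijective _ (Fmap_bij α z), fun x => by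
    show (Fmap α z x).1.card = _
    rw [show (Fmap α z x).1 = fib z.1 x.1 from rfl, ← wt_apply, z.2.2]⟩
  invFun e := ⟨zOf hP α e, fiberPartition_zOf hP α e, wt_zOf hP α e⟩
  left_inv z := by
    apply Subtype.ext; funext i
    show zOf hP α _ i = z.1 i
    rw [zOf]
    have hfib : i ∈ fib z.1 (z.1 i) := mem_fib.mpr rfl
    have hmem : z.1 i ∈ α.support := by
      have : z.1 i ∈ (wt z.1).support :=
        mem_support_wt.mpr fun h => Finset.notMem_empty i (h ▸ hfib)
      rwa [z.2.2] at this
    have key : (Equiv.ofBijective _ (Fmap_bij α z)) ⟨z.1 i, hmem⟩ =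
        ⟨blockOf hP i, blockOf_mem hP i⟩ := by
      apply Subtype.ext
      show fib z.1 (z.1 i) = blockOf hP i
      exact (blockOf_eq hP (fib_mem_P z.2.1 (by rw [z.2.2]; exact hmem)) hfib).symm
    rw [← key, Equiv.symm_apply_apply]
  right_inv e := by
    apply Subtype.ext; apply Equiv.ext; intro x
    apply Subtype.ext
    show fib (zOf hP α e) x.1 = (e.1 x).1
    rw [fib_zOf_mem hP α e x.2]

end Psi2

section Shape
variable {n d : ℕ} {P : Finset (Finset (Fin d))} (α : Fin n →₀ ℕ)

lemma filter_count {γ : Type*} [DecidableEq γ] (s : Finset γ) (g : γ → ℕ) (i : ℕ) :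
    (s.filter fun c => g c = i).card = Multiset.count i (s.val.map g) := by
  rw [Multiset.count_map, ← Finset.filter_val, Finset.card_val]
  congr 1
  exact Finset.filter_congr fun x _ => eq_comm

lemma univ_map_subtype {γ : Type*} [DecidableEq γ] (s : Finset γ) (g : γ → ℕ) :
    (Finset.univ : Finset ↥s).val.map (fun x => g x.1) = s.val.map g := by
  rw [Finset.univ_eq_attach, Finset.attach_val]
  conv_rhs => rw [← Multiset.attach_map_val s.val]
  rw [Multiset.map_map]
  rfl

lemma shape_of_equiv {e : ↥α.support ≃ ↥P} (he : ∀ x, (e x).1.card = α x.1) :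
    α.support.val.map α = P.val.map Finset.card := by
  rw [← univ_map_subtype α.support (fun x => α x), ← univ_map_subtype P Finset.card]
  have h3 : (Finset.univ : Finset ↥P).val = (Finset.univ : Finset ↥α.support).val.map e := by
    have := congrArg Finset.val (Finset.map_univ_equiv e)
    rw [Finset.map_val] at this
    exact this.symm
  rw [h3, Multiset.map_map]
  exact (Multiset.map_congr rfl fun x _ => (he x)).symm

set_option maxHeartbeats 1000000 in
lemma count_z (hP : IsSetPartition P) (hshape : α.support.val.map ⇑α = P.val.map Finset.card) :
    (Finset.univ.filter fun z : Fin d → Fin n =>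
        fiberPartition z = P ∧ wt z = α).card =
      ∏ᶠ i, ((P.filter fun B => B.card = i).card).factorial := by
  have h : ((Finset.univ : Finset ↥α.support).val.map fun x => α x.1) =
      ((Finset.univ : Finset ↥P).val.map fun B => B.1.card) := by
    rw [univ_map_subtype α.support ⇑α, univ_map_subtype P Finset.card]
    exact hshape
  have himg : (Finset.univ.image fun x : ↥α.support => α x.1) = P.image Finset.card := by
    ext i
    simp only [Finset.mem_image, Finset.mem_univ, true_and]
    constructor
    · rintro ⟨x, rfl⟩
      have hm : α x.1 ∈ α.support.val.map ⇑α :=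
        Multiset.mem_map.mpr ⟨x.1, Finset.mem_val.mpr x.2, rfl⟩
      rw [hshape] at hm
      obtain ⟨B, hB, hBc⟩ := Multiset.mem_map.mp hm
      exact ⟨B, Finset.mem_val.mp hB, hBc⟩
    · rintro ⟨B, hB, rfl⟩
      have hm : B.card ∈ P.val.map Finset.card :=
        Multiset.mem_map.mpr ⟨B, Finset.mem_val.mpr hB, rfl⟩
      rw [← hshape] at hm
      obtain ⟨x, hx, hxc⟩ := Multiset.mem_map.mp hm
      exact ⟨⟨x, Finset.mem_val.mp hx⟩, hxc⟩
  calc (Finset.univ.filter fun z : Fin d → Fin n =>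
        fiberPartition z = P ∧ wt z = α).card
      = Fintype.card {z : Fin d → Fin n // fiberPartition z = P ∧ wt z = α} :=
        (Fintype.card_subtype _).symm
    _ = Fintype.card {e : ↥α.support ≃ ↥P // ∀ x, (e x).1.card = α x.1} :=
        Fintype.card_congr (Psi hP α)
    _ = ∏ i ∈ (Finset.univ.image fun x : ↥α.support => α x.1),
          ((Finset.univ.filter fun x : ↥α.support => α x.1 = i).card).factorial :=
        count_fiber_equiv _ _ h
    _ = ∏ i ∈ P.image Finset.card, ((P.filter fun B => B.card = i).card).factorial := by
        rw [himg]
        refine Finset.prod_congr rfl fun i _ => ?_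
        congr 1
        rw [filter_count, filter_count, univ_map_subtype α.support ⇑α, hshape]
    _ = ∏ᶠ i, ((P.filter fun B => B.card = i).card).factorial := by
        refine (finprod_eq_prod_of_mulSupport_subset _ fun i hi => ?_).symm
        rw [Function.mem_mulSupport] at hi
        have hne : (P.filter fun B => B.card = i).Nonempty := by
          rw [Finset.nonempty_iff_ne_empty]
          intro hemp
          rw [hemp] at hi
          exact hi rfl
        obtain ⟨B, hB⟩ := hne
        rw [Finset.mem_filter] at hB
        exact Finset.mem_coe.mpr (Finset.mem_image.mpr ⟨B, hB.1, hB.2⟩)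

end Shape

section Final
variable {n d : ℕ} {P : Finset (Finset (Fin d))}

lemma finprod_fact_pos (P : Finset (Finset (Fin d))) :
    0 < ∏ᶠ i, ((P.filter fun B => B.card = i).card).factorial := by
  have hs : (Function.mulSupport fun i => ((P.filter fun B => B.card = i).card).factorial)
      ⊆ ↑(P.image Finset.card) := by
    intro i hi
    rw [Function.mem_mulSupport] at hi
    have hne : (P.filter fun B => B.card = i).Nonempty := by
      rw [Finset.nonempty_iff_ne_empty]
      intro hemp
      rw [hemp] at hi
      exact hi rfl
    obtain ⟨B, hB⟩ := hne
    rw [Finset.mem_filter] at hB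
    exact Finset.mem_coe.mpr (Finset.mem_image.mpr ⟨B, hB.1, hB.2⟩)
  rw [finprod_eq_prod_of_mulSupport_subset _ hs]
  exact Finset.prod_pos fun i _ => Nat.factorial_pos _

lemma exists_z (hP : IsSetPartition P) (α : Fin n →₀ ℕ)
    (hshape : α.support.val.map ⇑α = P.val.map Finset.card) :
    ∃ z : Fin d → Fin n, fiberPartition z = P ∧ wt z = α := by
  have hpos : 0 < (Finset.univ.filter fun z : Fin d → Fin n =>
      fiberPartition z = P ∧ wt z = α).card := by
    rw [count_z α hP hshape]
    exact finprod_fact_pos P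
  obtain ⟨z, hz⟩ := Finset.card_pos.mp hpos
  exact ⟨z, (Finset.mem_filter.mp hz).2⟩

lemma shape_of_mem (hP : IsSetPartition P) {z : Fin d → Fin n} (hz : fiberPartition z = P) :
    (wt z).support.val.map ⇑(wt z) = P.val.map Finset.card := by
  obtain ⟨e, he⟩ := Psi hP (wt z) ⟨z, hz, rfl⟩
  exact shape_of_equiv (wt z) he

end Final

/-- `m_A := Σ_{z : Fin d → Fin n, τ(z) = A} ι(z 0)·ι(z 1)⋯ι(z (d−1))` in the free
algebra. -/
noncomputable def mPart (n d : ℕ) (P : Finset (Finset (Fin d))) :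
    FreeAlgebra ℚ (Fin n) :=
  ∑ z ∈ Finset.univ.filter (fun z : Fin d → Fin n => fiberPartition z = P),
    ((List.finRange d).map fun i => FreeAlgebra.ι ℚ (z i)).prod

/-- The abelianization map, sending `ι(i)` to `X_i`. -/
noncomputable def ab (n : ℕ) : FreeAlgebra ℚ (Fin n) →ₐ[ℚ] MvPolynomial (Fin n) ℚ :=
  FreeAlgebra.lift ℚ fun i => MvPolynomial.X i

/-- The monomial symmetric polynomial `m_μ := Σ_{α with multiset of nonzero values μ}
∏_i X_i^{α(i)}`. -/
noncomputable def msym (n : ℕ) (μ : Multiset ℕ) : MvPolynomial (Fin n) ℚ :=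
  ∑ᶠ α : Fin n →₀ ℕ,
    if α.support.val.map ⇑α = μ then MvPolynomial.monomial α (1 : ℚ) else 0

section Final2
variable {n d : ℕ} {P : Finset (Finset (Fin d))}

lemma prod_X_list (z : Fin d → Fin n) (l : List (Fin d)) :
    (l.map fun i => (MvPolynomial.X (z i) : MvPolynomial (Fin n) ℚ)).prod =
      MvPolynomial.monomial (l.map fun i => Finsupp.single (z i) 1).sum 1 := by
  induction l with
  | nil => simp
  | cons a t ih =>
    simp only [List.map_cons, List.prod_cons, List.sum_cons, ih]
    rw [MvPolynomial.X, MvPolynomial.monomial_mul, one_mul]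

lemma ab_prod (z : Fin d → Fin n) :
    ab n (((List.finRange d).map fun i => FreeAlgebra.ι ℚ (z i)).prod) =
      MvPolynomial.monomial (wt z) 1 := by
  rw [map_list_prod, List.map_map]
  have hcomp : (⇑(ab n)) ∘ (fun i => FreeAlgebra.ι ℚ (z i)) =
      fun i => (MvPolynomial.X (z i) : MvPolynomial (Fin n) ℚ) := by
    funext i
    simp [ab]
  have hw : ((List.finRange d).map fun i => Finsupp.single (z i) 1).sum = wt z := by
    rw [wt, Fin.sum_univ_def]
  rw [hcomp, prod_X_list, hw]

lemma msym_eq (hP : IsSetPartition P) :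
    msym n (P.val.map Finset.card) =
      ∑ α ∈ (Finset.univ.filter fun z : Fin d → Fin n => fiberPartition z = P).image wt,
        MvPolynomial.monomial α (1 : ℚ) := by
  rw [msym, finsum_eq_sum_of_support_subset _ (s :=
    (Finset.univ.filter fun z : Fin d → Fin n => fiberPartition z = P).image wt) ?_]
  · refine Finset.sum_congr rfl fun α hα => ?_
    obtain ⟨z, hz, rfl⟩ := Finset.mem_image.mp hα
    exact if_pos (shape_of_mem hP (Finset.mem_filter.mp hz).2)
  · intro α hα
    rw [Function.mem_support] at hα
    have hsh : α.support.val.map ⇑α = P.val.map Finset.card := by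
      by_contra hc
      rw [if_neg hc] at hα
      exact hα rfl
    obtain ⟨z, hz1, hz2⟩ := exists_z hP α hsh
    exact Finset.mem_coe.mpr (Finset.mem_image.mpr
      ⟨z, Finset.mem_filter.mpr ⟨Finset.mem_univ z, hz1⟩, hz2⟩)

/-- `ab(m_A) = (∏_{i ≥ 1} a_i!) · m_{λ(A)}`, where `a_i` is the number of blocks of `A`
of cardinality `i` and `λ(A)` is the shape of `A`. -/
theorem stmt8 (n d : ℕ) (P : Finset (Finset (Fin d)))
    (hP : IsSetPartition P) (hPn : P.card ≤ n) :
    ab n (mPart n d P) =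
      (∏ᶠ i : ℕ, Nat.factorial ((P.filter fun B => B.card = i).card)) •
        msym n (P.val.map Finset.card) := by
  rw [mPart, map_sum]
  rw [Finset.sum_congr rfl fun z _ => ab_prod z]
  rw [Finset.sum_comp (fun α => MvPolynomial.monomial α (1 : ℚ)) wt]
  rw [msym_eq hP, Finset.smul_sum]
  refine Finset.sum_congr rfl fun α hα => ?_
  obtain ⟨z, hz, rfl⟩ := Finset.mem_image.mp hα
  have hzP := (Finset.mem_filter.mp hz).2
  have hsh := shape_of_mem hP hzP
  rw [Finset.filter_filter, count_z (wt z) hP hsh]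
end Final2
end

section
/- Every restricted growth word w admits a factorization w = b₁·b₂⋯b_r·t where each b_i is a bimodal word that is not convex and t is a (possibly empty) convex word, and this factorization is unique: the number r, the words b₁,…,b_r, and the tail t are uniquely determined by w. -/
/-- The maximal letter of a word (0 for the empty word). -/
def maxL (w : List ℕ) : ℕ := w.foldr max 0

/-- A restricted growth word. -/
def IsRGW (w : List ℕ) : Prop :=
  (∀ x ∈ w, 1 ≤ x) ∧ ∀ i < w.length, w.getD i 0 ≤ maxL (w.take i) + 1

/-- A primary word: a nonempty restricted growth word none of whose proper nonempty
suffixes is a restricted growth word. -/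
def IsPrimary (w : List ℕ) : Prop :=
  IsRGW w ∧ w ≠ [] ∧ ∀ t s : List ℕ, w = t ++ s → t ≠ [] → s ≠ [] → ¬ IsRGW s

/-- A convex word: empty, or of the form `1^{m₁}2^{m₂}⋯k^{m_k}` with
`m₁ ≥ m₂ ≥ ⋯ ≥ m_k ≥ 1`. -/
def IsConvex (w : List ℕ) : Prop :=
  ∃ μ : List ℕ, μ.Pairwise (· ≥ ·) ∧ (∀ m ∈ μ, 1 ≤ m) ∧
    w = ((List.range μ.length).map fun j => List.replicate (μ.getD j 0) (j + 1)).flatten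

/-- A bimodal word: the concatenation of a (possibly empty) convex word and a primary
word. -/
def IsBimodal (w : List ℕ) : Prop :=
  ∃ c p : List ℕ, IsConvex c ∧ IsPrimary p ∧ w = c ++ p

lemma foldr_max_eq (a : List ℕ) (c : ℕ) : a.foldr max c = max (maxL a) c := by
  induction a with
  | nil => simp [maxL]
  | cons x t ih => simp only [maxL, List.foldr_cons] at *; rw [ih, max_assoc]

lemma maxL_append (a b : List ℕ) : maxL (a ++ b) = max (maxL a) (maxL b) := by
  show (a++b).foldr max 0 = _
  rw [List.foldr_append, foldr_max_eq]; rfl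

lemma maxL_take_le (w : List ℕ) (n : ℕ) : maxL (w.take n) ≤ maxL w := by
  conv_rhs => rw [← List.take_append_drop n w]
  rw [maxL_append]; exact le_max_left _ _

lemma getD_take {w : List ℕ} {i n : ℕ} (h : i < n) : (w.take n).getD i 0 = w.getD i 0 := by
  simp [List.getD_eq_getElem?_getD, List.getElem?_take, h]

lemma IsRGW.take {w : List ℕ} (hw : IsRGW w) (n : ℕ) : IsRGW (w.take n) := by
  constructor
  · intro x hx; exact hw.1 x (List.mem_of_mem_take hx)
  · intro i hi
    have hin : i < n := lt_of_lt_of_le hi (by simp [List.length_take, min_le_left])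
    have hiw : i < w.length := lt_of_lt_of_le hi (by simp [List.length_take, min_le_right])
    rw [getD_take hin, List.take_take, min_eq_left (le_of_lt hin)]
    exact hw.2 i hiw

lemma IsRGW.append {a b : List ℕ} (ha : IsRGW a) (hb : IsRGW b) : IsRGW (a ++ b) := by
  constructor
  · intro x hx; rcases List.mem_append.1 hx with h | h
    exacts [ha.1 x h, hb.1 x h]
  · intro i hi
    rcases lt_or_ge i a.length with h | h
    · rw [List.getD_append _ _ _ _ h, List.take_append_of_le_length (le_of_lt h)]
      exact ha.2 i h
    · rw [List.getD_append_right _ _ _ _ h]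
      have hib : i - a.length < b.length := by
        simp [List.length_append] at hi; omega
      calc b.getD (i - a.length) 0 ≤ maxL (b.take (i - a.length)) + 1 := hb.2 _ hib
        _ ≤ maxL ((a ++ b).take i) + 1 := by
            rw [List.take_append, maxL_append]
            have : min i a.length = a.length := by omega
            exact Nat.add_le_add_right (le_max_right _ _) 1


/-- Recursive form of the convex word built from multiplicities. -/
def cvx : List ℕ → List ℕ
  | [] => []
  | m :: μ => List.replicate m 1 ++ (cvx μ).map (· + 1)

lemma cvx_eq (μ : List ℕ) :
    cvx μ = ((List.range μ.length).map fun j => List.replicate (μ.getD j 0) (j + 1)).flatten := by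
  induction μ with
  | nil => simp [cvx]
  | cons m μ ih =>
    rw [cvx, ih]
    rw [List.length_cons, List.range_succ_eq_map, List.map_cons, List.flatten_cons]
    have h0 : List.replicate m 1 = List.replicate ((m :: μ).getD 0 0) 1 := rfl
    rw [h0]
    congr 1
    rw [List.map_flatten, List.map_map, List.map_map]
    refine congrArg List.flatten (List.map_congr_left ?_)
    intro j _
    simp only [Function.comp_apply, List.map_replicate]
    rfl

lemma isConvex_iff (w : List ℕ) :
    IsConvex w ↔ ∃ μ : List ℕ, μ.Pairwise (· ≥ ·) ∧ (∀ m ∈ μ, 1 ≤ m) ∧ w = cvx μ := by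
  unfold IsConvex
  constructor <;> (rintro ⟨μ, h1, h2, h3⟩; exact ⟨μ, h1, h2, by rw [h3, cvx_eq]⟩)

lemma cvx_take (μ : List ℕ) (hs : μ.Pairwise (· ≥ ·)) (hp : ∀ m ∈ μ, 1 ≤ m) (n : ℕ) :
    ∃ μ' : List ℕ, μ'.Pairwise (· ≥ ·) ∧ (∀ m ∈ μ', 1 ≤ m) ∧
      (cvx μ).take n = cvx μ' ∧ ∀ x ∈ μ', ∃ y ∈ μ, x ≤ y := by
  induction μ generalizing n with
  | nil => exact ⟨[], by simp [cvx]⟩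
  | cons m μ ih =>
    rcases le_or_gt n m with h | h
    · rcases Nat.eq_zero_or_pos n with h0 | h0
      · exact ⟨[], by simp [cvx, h0]⟩
      · refine ⟨[n], by simp, by simp; omega, ?_, by exact fun x hx => ⟨m, by simp, by
          simp at hx; omega⟩⟩
        rw [cvx, cvx, List.take_append_of_le_length (by simpa using h),
          List.take_replicate, min_eq_left h]
        simp [cvx]
    · obtain ⟨μ'', hs'', hp'', heq'', hb''⟩ := ih hs.of_cons (fun x hx => hp x (by simp [hx]))
        (n - m)
      refine ⟨m :: μ'', ?_, ?_, ?_, ?_⟩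
      · rw [List.pairwise_cons]
        refine ⟨fun b hb => ?_, hs''⟩
        obtain ⟨y, hy, hxy⟩ := hb'' b hb
        exact le_trans hxy (List.rel_of_pairwise_cons hs hy)
      · intro x hx
        rcases List.mem_cons.1 hx with h1 | h1
        · rw [h1]; exact hp m (by simp)
        · exact hp'' x h1
      · rw [cvx, cvx, List.take_append, List.take_replicate,
          min_eq_right (by omega : m ≤ n), List.length_replicate, ← List.map_take, heq'']
      · intro x hx
        rcases List.mem_cons.1 hx with h1 | h1
        · exact ⟨m, by simp, le_of_eq h1⟩
        · obtain ⟨y, hy, hxy⟩ := hb'' x h1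
          exact ⟨y, by simp [hy], hxy⟩

lemma IsConvex.take {w : List ℕ} (hc : IsConvex w) (n : ℕ) : IsConvex (w.take n) := by
  rw [isConvex_iff] at hc ⊢
  obtain ⟨μ, hs, hp, rfl⟩ := hc
  obtain ⟨μ', h1, h2, h3, _⟩ := cvx_take μ hs hp n
  exact ⟨μ', h1, h2, h3⟩

lemma maxL_map_succ {u : List ℕ} (hu : u ≠ []) : maxL (u.map (· + 1)) = maxL u + 1 := by
  induction u with
  | nil => simp at hu
  | cons x t ih =>
    rcases eq_or_ne t [] with rfl | ht
    · simp [maxL]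
    · have : maxL (List.map (· + 1) (x :: t)) = max (x + 1) (maxL (t.map (· + 1))) := by
        simp [maxL]
      rw [this, ih ht]
      show _ = max x (maxL t) + 1
      omega

lemma IsRGW.head_eq_one {w : List ℕ} (hw : IsRGW w) (hne : w ≠ []) : w.getD 0 0 = 1 := by
  have hl : 0 < w.length := List.length_pos_iff.2 hne
  have h1 := hw.2 0 hl
  simp [maxL] at h1
  have h2 : 1 ≤ w.getD 0 0 := by
    have := hw.1 (w.getD 0 0) ?_
    · exact this
    · rw [List.getD_eq_getElem?_getD, List.getElem?_eq_getElem hl]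
      exact List.getElem_mem _
  rw [List.getD_eq_getElem?_getD] at h2 ⊢
  omega

lemma maxL_replicate_one (m : ℕ) (hm : 1 ≤ m) : maxL (List.replicate m 1) = 1 := by
  induction m with
  | zero => omega
  | succ k ih =>
    rcases Nat.eq_zero_or_pos k with rfl | hk
    · simp [maxL]
    · rw [List.replicate_succ]
      have : maxL (1 :: List.replicate k 1) = max 1 (maxL (List.replicate k 1)) := by
        simp [maxL]
      rw [this, ih hk]; simp

lemma IsRGW.shift {w : List ℕ} (hw : IsRGW w) (m : ℕ) (hm : 1 ≤ m) :
    IsRGW (List.replicate m 1 ++ w.map (· + 1)) := by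
  constructor
  · intro x hx
    rcases List.mem_append.1 hx with h | h
    · simp [List.eq_of_mem_replicate h]
    · obtain ⟨y, _, rfl⟩ := List.mem_map.1 h
      omega
  · intro i hi
    rcases lt_or_ge i m with h | h
    · rw [List.getD_append _ _ _ _ (by simpa using h)]
      simp [List.getD_eq_getElem?_getD, List.getElem?_replicate, h]
    · have hlen : i - m < w.length := by
        simp [List.length_append, List.length_replicate] at hi ⊢; omega
      rw [List.getD_append_right _ _ _ _ (by simpa using h), List.length_replicate]
      have hx : (w.map (· + 1)).getD (i - m) 0 = w.getD (i - m) 0 + 1 := by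
        rw [List.getD_eq_getElem?_getD, List.getD_eq_getElem?_getD,
          List.getElem?_map, List.getElem?_eq_getElem hlen]
        simp
      rw [hx]
      rw [List.take_append, List.take_replicate, List.length_replicate,
        min_eq_right h, maxL_append, maxL_replicate_one m hm, ← List.map_take]
      rcases Nat.eq_zero_or_pos (i - m) with h0 | h0
      · rw [h0, hw.head_eq_one (by intro hc; simp [hc] at hlen)]
        simp
      · have hne : w.take (i - m) ≠ [] := by
          rw [Ne, List.take_eq_nil_iff]
          push_neg
          exact ⟨by omega, by intro hc; rw [hc] at hlen; simp at hlen⟩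
        rw [maxL_map_succ hne]
        have := hw.2 (i - m) hlen
        omega

lemma cvx_isRGW (μ : List ℕ) (hp : ∀ m ∈ μ, 1 ≤ m) : IsRGW (cvx μ) := by
  induction μ with
  | nil => exact ⟨by simp [cvx], by simp [cvx]⟩
  | cons m t ih =>
    rw [cvx]
    exact (ih (fun x hx => hp x (by simp [hx]))).shift m (hp m (by simp))

lemma IsConvex.isRGW {w : List ℕ} (hc : IsConvex w) : IsRGW w := by
  rw [isConvex_iff] at hc
  obtain ⟨μ, _, hp, rfl⟩ := hc
  exact cvx_isRGW μ hp

lemma isRGW_nil : IsRGW [] := ⟨by simp, by simp⟩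

lemma isConvex_nil : IsConvex [] := ⟨[], by simp, by simp, by simp⟩

lemma IsBimodal.isRGW {b : List ℕ} (hb : IsBimodal b) : IsRGW b := by
  obtain ⟨c, p, hc, hp, rfl⟩ := hb
  exact hc.isRGW.append hp.1

lemma IsBimodal.ne_nil {b : List ℕ} (hb : IsBimodal b) : b ≠ [] := by
  obtain ⟨c, p, _, hp, rfl⟩ := hb
  simp [hp.2.1]

lemma rgw_flatten {l : List (List ℕ)} (h : ∀ b ∈ l, IsRGW b) : IsRGW l.flatten := by
  induction l with
  | nil => simpa using isRGW_nil
  | cons a t ih =>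
    rw [List.flatten_cons]
    exact (h a (by simp)).append (ih fun b hb => h b (by simp [hb]))

/-- Key uniqueness: a strictly shorter non-convex prefix with RGW remainder cannot
coexist with a bimodal prefix with remainder. -/
lemma no_longer {w b x b' x' : List ℕ} (hbx : b ++ x = w) (hb'x : b' ++ x' = w)
    (hlt : b.length < b'.length) (hbnc : ¬ IsConvex b) (hb' : IsBimodal b')
    (hx : IsRGW x) : False := by
  obtain ⟨c, p, hc, hp, rfl⟩ := hb'
  have hbw : b = w.take b.length := by rw [← hbx, List.take_left]
  have hxw : x = w.drop b.length := by rw [← hbx, List.drop_left]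
  have hlen : (c ++ p).length = c.length + p.length := List.length_append
  rcases le_or_gt b.length c.length with h | h
  · apply hbnc
    have hbc : b = c.take b.length := by
      conv_lhs => rw [hbw, ← hb'x, List.append_assoc, List.take_append_of_le_length h]
    rw [hbc]; exact hc.take _
  · have hpne : p ≠ [] := hp.2.1
    have hplen : 0 < p.length := List.length_pos_iff.2 hpne
    set k := b.length - c.length with hk
    refine hp.2.2 (p.take k) (p.drop k) (List.take_append_drop k p).symm ?_ ?_ ?_
    · rw [Ne, List.take_eq_nil_iff]; push_neg
      exact ⟨by omega, hpne⟩
    · rw [Ne, List.drop_eq_nil_iff]; push_neg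
      rw [List.length_append] at hlt; omega
    · have h1 : p.drop k = (c ++ p).drop b.length := by
        rw [show b.length = c.length + k by omega, List.drop_append,
          List.drop_eq_nil_of_le (as := c) (i := c.length + k) (by omega), List.nil_append, Nat.add_sub_cancel_left]
      have h2 : w.take (c ++ p).length = c ++ p := by rw [← hb'x, List.take_left]
      have h3 : p.drop k = x.take ((c ++ p).length - b.length) := by
        rw [h1, hxw, ← List.drop_take, h2]
      rw [h3]
      exact hx.take _

lemma firstBlock_unique {w b x b' x' : List ℕ} (hbx : b ++ x = w) (hb'x : b' ++ x' = w)
    (hbnc : ¬ IsConvex b) (hb'nc : ¬ IsConvex b') (hb : IsBimodal b) (hb' : IsBimodal b')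
    (hx : IsRGW x) (hx' : IsRGW x') : b = b' := by
  rcases lt_trichotomy b.length b'.length with h | h | h
  · exact absurd (no_longer hbx hb'x h hbnc hb' hx) (by simp)
  · have h1 : b = w.take b.length := by rw [← hbx, List.take_left]
    have h2 : b' = w.take b'.length := by rw [← hb'x, List.take_left]
    rw [h1, h2, h]
  · exact absurd (no_longer hb'x hbx h hb'nc hb hx') (by simp)

lemma exists_block : ∀ n (c w : List ℕ), w.length ≤ n → IsConvex c → IsRGW w →
    ¬ IsConvex (c ++ w) →
    ∃ j, 1 ≤ j ∧ j ≤ w.length ∧ IsBimodal (c ++ w.take j) ∧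
      ¬ IsConvex (c ++ w.take j) ∧ IsRGW (w.drop j) := by
  intro n
  induction n with
  | zero =>
    intro c w hn hc _ hnc
    rw [List.length_eq_zero_iff.1 (Nat.le_zero.1 hn)] at hnc
    exact absurd (by simpa using hc) hnc
  | succ n ih =>
    intro c w hn hc hw hnc
    have hwne : w ≠ [] := by rintro rfl; exact hnc (by simpa using hc)
    have hwl : 0 < w.length := List.length_pos_iff.2 hwne
    have hP : ∃ j, 1 ≤ j ∧ IsRGW (w.drop j) := ⟨w.length, hwl, by simp [isRGW_nil]⟩
    classical
    set j₀ := Nat.find hP with hj₀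
    obtain ⟨hj₀1, hj₀R⟩ := Nat.find_spec hP
    have hj₀le : j₀ ≤ w.length := Nat.find_le ⟨hwl, by simp [isRGW_nil]⟩
    have hmin : ∀ k < j₀, ¬ (1 ≤ k ∧ IsRGW (w.drop k)) := fun k hk => Nat.find_min hP hk
    have hp₁ : IsPrimary (w.take j₀) := by
      refine ⟨hw.take j₀, ?_, ?_⟩
      · rw [Ne, List.take_eq_nil_iff]; push_neg; exact ⟨by omega, hwne⟩
      · intro t s heq ht hs hsR
        have hlen : t.length + s.length = j₀ := by
          have := congrArg List.length heq
          simp [List.length_take] at this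
          omega
        have hsl : 0 < s.length := List.length_pos_iff.2 hs
        have htl : 0 < t.length := List.length_pos_iff.2 ht
        have hdropt : w.drop t.length = s ++ w.drop j₀ := by
          conv_lhs => rw [← List.take_append_drop j₀ w, heq]
          rw [List.append_assoc, List.drop_left]
        exact hmin t.length (by omega) ⟨htl, by rw [hdropt]; exact hsR.append hj₀R⟩
    by_cases hcc : IsConvex (c ++ w.take j₀)
    · have hrec := ih (c ++ w.take j₀) (w.drop j₀) (by simp; omega) hcc hj₀R
        (by rw [List.append_assoc, List.take_append_drop]; exact hnc)
      obtain ⟨j', h1, h2, h3, h4, h5⟩ := hrec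
      refine ⟨j₀ + j', by omega, by simp at h2; omega, ?_, ?_, ?_⟩
      · rw [List.take_add, ← List.append_assoc]; exact h3
      · rw [List.take_add, ← List.append_assoc]; exact h4
      · rwa [List.drop_drop] at h5
    · exact ⟨j₀, hj₀1, hj₀le, ⟨c, w.take j₀, hc, hp₁, rfl⟩, hcc, hj₀R⟩

def FactOf (w : List ℕ) (bt : List (List ℕ) × List ℕ) : Prop :=
  (∀ b ∈ bt.1, IsBimodal b ∧ ¬ IsConvex b) ∧ IsConvex bt.2 ∧ bt.1.flatten ++ bt.2 = w

lemma fact_exists : ∀ n (w : List ℕ), w.length ≤ n → IsRGW w → ∃ bt, FactOf w bt := by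
  intro n
  induction n with
  | zero =>
    intro w hn _
    rw [List.length_eq_zero_iff.1 (Nat.le_zero.1 hn)]
    exact ⟨([], []), by simp, isConvex_nil, by simp⟩
  | succ n ih =>
    intro w hn hw
    by_cases hcv : IsConvex w
    · exact ⟨([], w), by simp, hcv, by simp⟩
    · obtain ⟨j, hj1, hj2, hb, hbnc, hR⟩ :=
        exists_block (n + 1) [] w hn isConvex_nil hw (by simpa using hcv)
      simp only [List.nil_append] at hb hbnc
      obtain ⟨⟨bs, t⟩, h1, h2, h3⟩ := ih (w.drop j) (by simp; omega) hR
      refine ⟨(w.take j :: bs, t), ?_, h2, ?_⟩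
      · intro b hbm
        rcases List.mem_cons.1 hbm with h | h
        · rw [h]; exact ⟨hb, hbnc⟩
        · exact h1 b h
      · simp only [List.flatten_cons, List.append_assoc]
        rw [h3, List.take_append_drop]

lemma fact_unique : ∀ n (w : List ℕ), w.length ≤ n → ∀ y z, FactOf w y → FactOf w z → y = z := by
  intro n
  induction n with
  | zero =>
    intro w hn y z hy hz
    have hw : w = [] := List.length_eq_zero_iff.1 (Nat.le_zero.1 hn)
    subst hw
    obtain ⟨bs, t⟩ := y
    obtain ⟨bs', t'⟩ := z
    have h1 : bs = [] := by
      cases bs with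
      | nil => rfl
      | cons b r =>
        have := hy.2.2
        simp only [List.flatten_cons, List.append_assoc] at this
        have hbe : b = [] := by
          rcases List.append_eq_nil_iff.1 this with ⟨h, _⟩
          exact h
        exact absurd hbe (hy.1 b (by simp)).1.ne_nil
    have h2 : bs' = [] := by
      cases bs' with
      | nil => rfl
      | cons b r =>
        have := hz.2.2
        simp only [List.flatten_cons, List.append_assoc] at this
        have hbe : b = [] := by
          rcases List.append_eq_nil_iff.1 this with ⟨h, _⟩
          exact h
        exact absurd hbe (hz.1 b (by simp)).1.ne_nil
    subst h1; subst h2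
    have := hy.2.2; simp at this
    have h2 := hz.2.2; simp at h2
    simp [this, h2]
  | succ n ih =>
    intro w hn y z hy hz
    obtain ⟨bs, t⟩ := y
    obtain ⟨bs', t'⟩ := z
    -- helper: if one list is nil then w is convex
    cases bs with
    | nil =>
      have hwt : t = w := by simpa using hy.2.2
      have hwcv : IsConvex w := hwt ▸ hy.2.1
      cases bs' with
      | nil =>
        have hwt' : t' = w := by simpa using hz.2.2
        simp [hwt, hwt']
      | cons b' r' =>
        exfalso
        have hb'w : b' ++ (r'.flatten ++ t') = w := by
          simpa [List.append_assoc] using hz.2.2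
        have : b' = w.take b'.length := by rw [← hb'w, List.take_left]
        exact (hz.1 b' (by simp)).2 (this ▸ hwcv.take b'.length)
    | cons b r =>
      cases bs' with
      | nil =>
        exfalso
        have hwt : t' = w := by simpa using hz.2.2
        have hwcv : IsConvex w := hwt ▸ hz.2.1
        have hbw : b ++ (r.flatten ++ t) = w := by
          simpa [List.append_assoc] using hy.2.2
        have : b = w.take b.length := by rw [← hbw, List.take_left]
        exact (hy.1 b (by simp)).2 (this ▸ hwcv.take b.length)
      | cons b' r' =>
        have hbw : b ++ (r.flatten ++ t) = w := by
          simpa [List.append_assoc] using hy.2.2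
        have hb'w : b' ++ (r'.flatten ++ t') = w := by
          simpa [List.append_assoc] using hz.2.2
        have hxR : IsRGW (r.flatten ++ t) :=
          (rgw_flatten fun u hu => ((hy.1 u (by simp [hu])).1).isRGW).append hy.2.1.isRGW
        have hxR' : IsRGW (r'.flatten ++ t') :=
          (rgw_flatten fun u hu => ((hz.1 u (by simp [hu])).1).isRGW).append hz.2.1.isRGW
        have hbb : b = b' :=
          firstBlock_unique hbw hb'w (hy.1 b (by simp)).2 (hz.1 b' (by simp)).2
            (hy.1 b (by simp)).1 (hz.1 b' (by simp)).1 hxR hxR'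
        subst hbb
        have hxx : r.flatten ++ t = r'.flatten ++ t' := by
          have := hbw.trans hb'w.symm
          exact List.append_cancel_left this
        have hbne : b ≠ [] := (hy.1 b (by simp)).1.ne_nil
        have hlen : (r.flatten ++ t).length ≤ n := by
          have h1 := congrArg List.length hbw
          simp only [List.length_append] at h1
          have h2 : 0 < b.length := List.length_pos_iff.2 hbne
          simp only [List.length_append]
          omega
        have hrec := ih (r.flatten ++ t) hlen (r, t) (r', t')
          ⟨fun u hu => hy.1 u (by simp [hu]), hy.2.1, rfl⟩
          ⟨fun u hu => hz.1 u (by simp [hu]), hz.2.1, hxx.symm ▸ rfl⟩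
        simp only [Prod.mk.injEq] at hrec ⊢
        exact ⟨by rw [hrec.1], hrec.2⟩

/-- Every restricted growth word factors uniquely as `b₁·b₂⋯b_r·t` with each `b_i` a
non-convex bimodal word and `t` a (possibly empty) convex tail. -/
theorem stmt13 (w : List ℕ) (hw : IsRGW w) :
    ∃! bt : List (List ℕ) × List ℕ,
      (∀ b ∈ bt.1, IsBimodal b ∧ ¬ IsConvex b) ∧ IsConvex bt.2 ∧
        bt.1.flatten ++ bt.2 = w := by
  obtain ⟨bt, hbt⟩ := fact_exists w.length w le_rfl hw
  exact ⟨bt, hbt, fun y hy => fact_unique w.length w le_rfl y bt hy hbt⟩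
end
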